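/- Assume the standing hypotheses on (α,β) and p. For every integer k with a₂ + 1 ≤ k ≤ b₁, the rational function (t+k)·R(t) has nonvanishing denominator at t = −k (R has at most a simple pole there), and its value B_k at t = −k is a rational number with p-adic valuation at least 1 (that is, B_k ≡ 0 mod p). -/

import Mathlib

open scoped BigOperators
open Polynomial

noncomputable section

/-- The rising factorial (Pochhammer symbol) `(a)_k` for a rational `a`. -/
def poch (a : ℚ) (k : ℕ) : ℚ := Polynomial.eval a (ascPochhammer ℚ k)

/-- The numerator `N(t) = ∏_{i=2}^{n} ∏_{j=0}^{p−aᵢ−2} (t + 1 − rᵢ − p + j)` of the rational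
function `R(t)`, as a polynomial (`r`, `a` are 0-based: `rᵢ = r (i−1)`, `aᵢ = a (i−1)`). -/
def Rnum (n p : ℕ) (r : ℕ → ℚ) (a : ℕ → ℕ) : ℚ[X] :=
  ∏ i ∈ Finset.Icc 2 n, ∏ j ∈ Finset.range (p - a (i - 1) - 1),
    (X + C (1 - r (i - 1) - (p : ℚ) + (j : ℚ)))

/-- The denominator `D(t)` of `R(t)` with the simple factor `(t + a₁ + 1 + j)` at
`j = k − a₁ − 1` removed; i.e. the denominator of `(t+k)·R(t)` near `t = −k` for
`a₁ + 1 ≤ k ≤ b₁`.  Here `a₁ = a 0`, `b₁ = b 0`, `bᵢ = b (i−1)`. -/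
def RdenMid (p nhat : ℕ) (a1 b1 : ℕ) (b : ℕ → ℕ) (k : ℕ) : ℚ[X] :=
  (∏ j ∈ Finset.range (a1 + 1), (X + C (j : ℚ)) ^ 2) *
    (∏ j ∈ (Finset.range (b1 - a1)).filter (fun j => j ≠ k - a1 - 1),
      (X + C ((a1 : ℚ) + 1 + j))) *
    (∏ j ∈ Finset.range (p - b1 - 1), (X + C ((b1 : ℚ) + 1 + j)) ^ 2) *
    ∏ i ∈ Finset.Icc 2 nhat, ∏ j ∈ Finset.range (p - b (i - 1) - 1),
      (-X + C (1 + (i : ℚ) * p + (j : ℚ)))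

/-! At `t = -k` every linear factor of the denominator is an integer prime to `p`, hence a
`p`-adic unit. In the numerator every factor `x` satisfies `(p - 1) x ∈ ℤ`, since
`(p - 1) rᵢ = aᵢ`, so it is a `p`-adic integer, and the factor `i = 2`, `j = k - a₂ - 1`
equals `-p (1 + r₂)`. -/

open Finset

lemma Int.not_natCast_dvd_of_lt {p : ℕ} {z : ℤ} (h0 : z ≠ 0) (hlo : -(p : ℤ) < z) (hhi : z < p) :
    ¬ (p : ℤ) ∣ z :=
  fun hd => h0 (Int.eq_zero_of_abs_lt_dvd hd (abs_lt.2 ⟨hlo, hhi⟩))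

section PadicUnits

variable {p : ℕ} [Fact p.Prime]

lemma Padic.norm_intCast_eq_one_of_not_dvd {z : ℤ} (h : ¬ (p : ℤ) ∣ z) : ‖(z : ℚ_[p])‖ = 1 :=
  le_antisymm (Padic.norm_int_le_one z) (not_lt.1 (mt Padic.norm_intCast_lt_one_iff.1 h))

lemma Padic.norm_ratCast_eq_one_of_not_dvd {x : ℚ} {z : ℤ} (hx : x = z) (h : ¬ (p : ℤ) ∣ z) :
    ‖(x : ℚ_[p])‖ = 1 := by
  rw [hx, Rat.cast_intCast]
  exact norm_intCast_eq_one_of_not_dvd h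

lemma Padic.norm_natCast_sub_one : ‖(p : ℚ_[p]) - 1‖ = 1 := by
  have := (Fact.out : p.Prime).two_le
  rw [show (p : ℚ_[p]) - 1 = ((p - 1 : ℤ) : ℚ_[p]) by push_cast; ring]
  exact norm_intCast_eq_one_of_not_dvd
    (Int.not_natCast_dvd_of_lt (by omega) (by omega) (by omega))

lemma Padic.norm_ratCast_eq_of_pred_mul_eq {x : ℚ} {m : ℤ} (h : ((p : ℚ) - 1) * x = m) :
    ‖(x : ℚ_[p])‖ = ‖(m : ℚ_[p])‖ := by
  have h' : ((p : ℚ_[p]) - 1) * (x : ℚ_[p]) = (m : ℚ_[p]) := by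
    exact_mod_cast congrArg (fun y : ℚ => (y : ℚ_[p])) h
  rw [← h', norm_mul, norm_natCast_sub_one, one_mul]

lemma Padic.exists_eq_p_mul_of_norm_le_inv {x : ℚ_[p]} (hx : ‖x‖ ≤ (p : ℝ)⁻¹) :
    ∃ c : ℤ_[p], x = p * c := by
  have hp : (0 : ℝ) < p := Nat.cast_pos.2 (Fact.out : p.Prime).pos
  refine ⟨⟨x / p, ?_⟩, ?_⟩
  · rw [norm_div, norm_p, div_inv_eq_mul]
    exact (mul_le_mul_of_nonneg_right hx hp.le).trans_eq (inv_mul_cancel₀ hp.ne')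
  · have : (p : ℚ_[p]) ≠ 0 := by exact_mod_cast hp.ne'
    simp [mul_div_cancel₀ _ this]

end PadicUnits

lemma norm_prod_le_of_mem {K ι : Type*} [NormedField K] [DecidableEq ι] {s : Finset ι}
    {f : ι → K} {i₀ : ι} (hi₀ : i₀ ∈ s) (h : ∀ i ∈ s, ‖f i‖ ≤ 1) {ε : ℝ} (hε : ‖f i₀‖ ≤ ε) :
    ‖∏ i ∈ s, f i‖ ≤ ε := by
  rw [← mul_prod_erase s f hi₀, norm_mul, norm_prod]
  exact (mul_le_of_le_one_right (norm_nonneg _) (prod_le_one (fun _ _ => norm_nonneg _)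
    fun i hi => h i (mem_of_mem_erase hi))).trans hε

section Residue

variable {p : ℕ} [Fact p.Prime]

lemma norm_eval_Rnum_le {n k : ℕ} {r : ℕ → ℚ} {a : ℕ → ℕ} (hn : 2 ≤ n)
    (ha : ∀ i, i < n → (a i : ℚ) = ((p : ℚ) - 1) * r i) (hak : a 1 < k) (hkp : k < p) :
    ‖(((Rnum n p r a).eval (-(k : ℚ)) : ℚ) : ℚ_[p])‖ ≤ (p : ℝ)⁻¹ := by
  have hfactor : ∀ i ∈ Icc 2 n, ∀ j : ℕ,
      ‖((-(k : ℚ) + (1 - r (i - 1) - p + j) : ℚ) : ℚ_[p])‖ ≤ 1 := by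
    intro i hi j
    rw [mem_Icc] at hi
    refine (Padic.norm_ratCast_eq_of_pred_mul_eq (m := (p - 1) * (1 + j - k - p) - a (i - 1))
      ?_).trans_le (Padic.norm_int_le_one _)
    push_cast
    rw [ha (i - 1) (by omega)]
    ring
  have hfactor_p :
      ‖((-(k : ℚ) + (1 - r 1 - p + (k - a 1 - 1 : ℕ)) : ℚ) : ℚ_[p])‖ ≤ (p : ℝ)⁻¹ := by
    rw [Padic.norm_ratCast_eq_of_pred_mul_eq (m := p * -(p - 1 + a 1)), Int.cast_mul,
      norm_mul, Int.cast_natCast, Padic.norm_p]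
    · exact mul_le_of_le_one_right (by positivity) (Padic.norm_int_le_one _)
    · rw [Nat.cast_sub (by omega), Nat.cast_sub (by omega)]
      push_cast
      rw [ha 1 (by omega)]
      ring
  simp only [Rnum, eval_prod, eval_add, eval_X, eval_C, Rat.cast_prod]
  refine norm_prod_le_of_mem (mem_Icc.2 ⟨le_rfl, hn⟩) (fun i hi => ?_)
    (norm_prod_le_of_mem (mem_range.2 (by norm_num; omega)) (fun j _ => hfactor 2 (by simpa) j)
      hfactor_p)
  rw [norm_prod]
  exact prod_le_one (fun _ _ => norm_nonneg _) fun j _ => hfactor i hi j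

lemma norm_eval_RdenMid_eq_one {nhat a1 b1 k : ℕ} {b : ℕ → ℕ} (hak : a1 < k) (hkb : k ≤ b1)
    (hbp : b1 < p) (hb : ∀ i ∈ Icc 2 nhat, k ≤ b (i - 1)) :
    ‖(((RdenMid p nhat a1 b1 b k).eval (-(k : ℚ)) : ℚ) : ℚ_[p])‖ = 1 := by
  have hunit {x : ℚ} (z : ℤ) (hx : x = z) (h0 : z ≠ 0) (hlo : -(p : ℤ) < z) (hhi : z < p) :
      ‖(x : ℚ_[p])‖ = 1 :=
    Padic.norm_ratCast_eq_one_of_not_dvd hx (Int.not_natCast_dvd_of_lt h0 hlo hhi)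
  have h1 : ∀ j ∈ range (a1 + 1), ‖((-(k : ℚ) + j : ℚ) : ℚ_[p])‖ ^ 2 = 1 := fun j hj => by
    rw [mem_range] at hj
    rw [hunit (j - k) (by push_cast; ring) (by omega) (by omega) (by omega), one_pow]
  have h2 : ∀ j ∈ (range (b1 - a1)).filter (· ≠ k - a1 - 1),
      ‖((-(k : ℚ) + (a1 + 1 + j) : ℚ) : ℚ_[p])‖ = 1 := fun j hj => by
    rw [mem_filter, mem_range] at hj
    exact hunit (a1 + 1 + j - k) (by push_cast; ring) (by omega) (by omega) (by omega)
  have h3 : ∀ j ∈ range (p - b1 - 1), ‖((-(k : ℚ) + (b1 + 1 + j) : ℚ) : ℚ_[p])‖ ^ 2 = 1 :=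
    fun j hj => by
      rw [mem_range] at hj
      rw [hunit (b1 + 1 + j - k) (by push_cast; ring) (by omega) (by omega) (by omega), one_pow]
  have h4 : ∀ i ∈ Icc 2 nhat, ∀ j ∈ range (p - b (i - 1) - 1),
      ‖((- -(k : ℚ) + (1 + i * p + j) : ℚ) : ℚ_[p])‖ = 1 := fun i hi j hj => by
    have := hb i hi
    rw [mem_range] at hj
    refine Padic.norm_ratCast_eq_one_of_not_dvd (z := k + 1 + j + i * p) (by push_cast; ring)
      ((dvd_add_left (dvd_mul_left _ _)).not.2 ?_)
    exact Int.not_natCast_dvd_of_lt (by omega) (by omega) (by omega)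
  simp only [RdenMid, eval_mul, eval_prod, eval_pow, eval_add, eval_neg, eval_X, eval_C,
    Rat.cast_mul, Rat.cast_prod, Rat.cast_pow, norm_mul, norm_prod, norm_pow]
  rw [prod_eq_one h1, prod_eq_one h2, prod_eq_one h3,
    prod_eq_one fun i hi => prod_eq_one (h4 i hi)]
  norm_num

end Residue

theorem residue_Bk_vanishes_mod_p_mid_range_general
    (n : ℕ) (hn : 2 ≤ n)
    (r q : ℕ → ℚ)
    (hr_mono : ∀ i j, i ≤ j → j < n → r i ≤ r j)
    (hq_mono : ∀ i j, i ≤ j → j < n → q i ≤ q j)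
    (hq_top : q (n - 1) = 1)
    (p : ℕ) [Fact (Nat.Prime p)]
    (a b : ℕ → ℕ)
    (ha : ∀ i, i < n → (a i : ℚ) = ((p : ℚ) - 1) * r i)
    (hb : ∀ i, i < n → (b i : ℚ) = ((p : ℚ) - 1) * q i)
    (nhat : ℕ) (hnhat_le : nhat ≤ n)
    (k : ℕ) (hk : a 1 + 1 ≤ k) (hk' : k ≤ b 0) :
    (RdenMid p nhat (a 0) (b 0) b k).eval (-(k : ℚ)) ≠ 0 ∧
      ∃ c : ℤ_[p],
        (((Rnum n p r a).eval (-(k : ℚ)) /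
            (RdenMid p nhat (a 0) (b 0) b k).eval (-(k : ℚ)) : ℚ) : ℚ_[p])
          = (p : ℚ_[p]) * (c : ℚ_[p]) := by
  have hp_pred : (0 : ℚ) ≤ p - 1 := by
    linarith [(Nat.one_lt_cast (α := ℚ)).2 (Fact.out : p.Prime).one_lt]
  have hscale {s : ℕ → ℚ} {c : ℕ → ℕ} (hc : ∀ i, i < n → (c i : ℚ) = ((p : ℚ) - 1) * s i)
      {i j : ℕ} (hij : s i ≤ s j) (hi : i < n) (hj : j < n) : c i ≤ c j := by
    exact_mod_cast (hc i hi).trans_le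
      ((mul_le_mul_of_nonneg_left hij hp_pred).trans_eq (hc j hj).symm)
  have ha01 : a 0 ≤ a 1 := hscale ha (hr_mono 0 1 (by omega) (by omega)) (by omega) (by omega)
  have hb_le (i : ℕ) (hi : i < n) : b 0 ≤ b i := hscale hb (hq_mono 0 i i.zero_le hi) (by omega) hi
  have hb_top : b (n - 1) + 1 = p := by
    have := hb (n - 1) (by omega)
    rw [hq_top, mul_one] at this
    have := (Fact.out : p.Prime).one_lt
    exact_mod_cast (by linarith : (b (n - 1) : ℚ) + 1 = p)
  have hb0p : b 0 < p := by have := hb_le (n - 1) (by omega); omega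
  have hden := norm_eval_RdenMid_eq_one (p := p) (nhat := nhat) (a1 := a 0) (b := b)
    (by omega) hk' hb0p
    fun i hi => hk'.trans (hb_le (i - 1) (by simp only [mem_Icc] at hi; omega))
  refine ⟨fun h => by simp [h] at hden, Padic.exists_eq_p_mul_of_norm_le_inv ?_⟩
  rw [Rat.cast_div, norm_div, hden, div_one]
  exact norm_eval_Rnum_le hn ha (by omega) (by omega)

/-- Under the standing hypotheses on `(α,β)` and `p ≡ 1 (mod M)`:
for every `k` with `a₂ + 1 ≤ k ≤ b₁`, the rational function `(t+k)·R(t)` has nonvanishing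
denominator at `t = −k` (`R` has at most a simple pole there), and its value `B_k` at `t = −k`
satisfies `B_k ≡ 0 (mod p)`. -/
theorem residue_Bk_vanishes_mod_p_mid_range
    (n : ℕ) (hn : 2 ≤ n)
    (r q : ℕ → ℚ)
    (hr_pos : ∀ i, i < n → 0 < r i) (hr_lt : ∀ i, i < n → r i < 1)
    (hr_mono : ∀ i j, i ≤ j → j < n → r i ≤ r j)
    (hq_pos : ∀ i, i < n → 0 < q i)
    (hq_mono : ∀ i j, i ≤ j → j < n → q i ≤ q j)
    (hq_top : q (n - 1) = 1) (hq_top' : q (n - 2) = 1)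
    (hqr : ∀ j, j + 2 < n → r (j + 2) < q j)
    (hprim : ∀ i, i < n → ∀ j, j < n → ∀ z : ℤ, r i - q j ≠ (z : ℚ))
    (M : ℕ) (hM : 0 < M)
    (hMr : ∀ i, i < n → ∃ z : ℤ, (M : ℚ) * r i = (z : ℚ))
    (hMq : ∀ i, i < n → ∃ z : ℤ, (M : ℚ) * q i = (z : ℚ))
    (p : ℕ) [Fact (Nat.Prime p)] (hpM : p ≡ 1 [MOD M])
    (a b : ℕ → ℕ)
    (ha : ∀ i, i < n → (a i : ℚ) = ((p : ℚ) - 1) * r i)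
    (hb : ∀ i, i < n → (b i : ℚ) = ((p : ℚ) - 1) * q i)
    (nhat : ℕ) (hnhat_le : nhat ≤ n) (hnhat0 : nhat = 0 ∨ 2 ≤ nhat)
    (hnhat : ∀ i, 2 ≤ i → i ≤ n → (q (i - 1) < 1 ↔ i ≤ nhat))
    (k : ℕ) (hk : a 1 + 1 ≤ k) (hk' : k ≤ b 0) :
    (RdenMid p nhat (a 0) (b 0) b k).eval (-(k : ℚ)) ≠ 0 ∧
      ∃ c : ℤ_[p],
        (((Rnum n p r a).eval (-(k : ℚ)) /
            (RdenMid p nhat (a 0) (b 0) b k).eval (-(k : ℚ)) : ℚ) : ℚ_[p])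
          = (p : ℚ_[p]) * (c : ℚ_[p]) :=
  residue_Bk_vanishes_mod_p_mid_range_general n hn r q hr_mono hq_mono hq_top p a b ha hb nhat
    hnhat_le k hk hk'
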